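/- arXiv:2502.10332 — 10 statements merged into one kernel-verified Lean document; each statement's English description precedes it below -/
import Mathlib

section
/- For all X, Y, Z ∈ n: (∇_X ric)(Y,Z) = ¼⟨j_{X^z} Y^v, J(Z^v)⟩ + ¼⟨j_{X^z} Z^v, J(Y^v)⟩ + ¼⟨j_{Y^z} X^v, J(Z^v)⟩ + ¼⟨j_{Z^z} X^v, J(Y^v)⟩ − ⅛⟨[X^v,Z^v], B(Y^z)⟩ − ⅛⟨[X^v,Y^v], B(Z^z)⟩. -/
open scoped RealInnerProductSpace

variable {v z : Type*}
  [NormedAddCommGroup v] [InnerProductSpace ℝ v] [FiniteDimensional ℝ v]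
  [NormedAddCommGroup z] [InnerProductSpace ℝ z] [FiniteDimensional ℝ z]

/-- The Levi-Civita connection of the 2-step nilpotent Lie group `N(j)` evaluated on
left-invariant vector fields: `∇_V X = −½ j_{V^z} X^v − ½ j_{X^z} V^v + ½ [V^v, X^v]`,
where `[x, y] = β x y`. -/
noncomputable def nabla (j : z →ₗ[ℝ] v →ₗ[ℝ] v) (β : v →ₗ[ℝ] v →ₗ[ℝ] z)
    (V X : v × z) : v × z :=
  (-((1/2 : ℝ) • j V.2 X.1) - (1/2 : ℝ) • j X.2 V.1, (1/2 : ℝ) • β V.1 X.1)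

/-- `J = Σ_k j_{z_k} ∘ j_{z_k}` for an orthonormal basis `{z_k}` of `z`. -/
noncomputable def Jmap {m : ℕ} (j : z →ₗ[ℝ] v →ₗ[ℝ] v)
    (zb : OrthonormalBasis (Fin m) ℝ z) (x : v) : v :=
  ∑ k, j (zb k) (j (zb k) x)

/-- `B a = Σ_i [v_i, j_a v_i]` for an orthonormal basis `{v_i}` of `v`. -/
noncomputable def Bmap {n : ℕ} (j : z →ₗ[ℝ] v →ₗ[ℝ] v) (β : v →ₗ[ℝ] v →ₗ[ℝ] z)
    (vb : OrthonormalBasis (Fin n) ℝ v) (a : z) : z :=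
  ∑ i, β (vb i) (j a (vb i))

/-- The Ricci operator `ρ(X) = ½ J(X^v) + ¼ B(X^z)`. -/
noncomputable def rho {n m : ℕ} (j : z →ₗ[ℝ] v →ₗ[ℝ] v) (β : v →ₗ[ℝ] v →ₗ[ℝ] z)
    (vb : OrthonormalBasis (Fin n) ℝ v) (zb : OrthonormalBasis (Fin m) ℝ z)
    (X : v × z) : v × z :=
  ((1/2 : ℝ) • Jmap j zb X.1, (1/4 : ℝ) • Bmap j β vb X.2)

/-- The Ricci tensor `ric(X,Y) = ⟨ρ(X), Y⟩` (product inner product on `n = v × z`). -/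
noncomputable def ric {n m : ℕ} (j : z →ₗ[ℝ] v →ₗ[ℝ] v) (β : v →ₗ[ℝ] v →ₗ[ℝ] z)
    (vb : OrthonormalBasis (Fin n) ℝ v) (zb : OrthonormalBasis (Fin m) ℝ z)
    (X Y : v × z) : ℝ :=
  ⟪(rho j β vb zb X).1, Y.1⟫ + ⟪(rho j β vb zb X).2, Y.2⟫

/-- The covariant derivative of the Ricci tensor,
`(∇_X ric)(Y,Z) = ⟨∇_X(ρ(Y)) − ρ(∇_X Y), Z⟩`. -/
noncomputable def nablaRic {n m : ℕ} (j : z →ₗ[ℝ] v →ₗ[ℝ] v) (β : v →ₗ[ℝ] v →ₗ[ℝ] z)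
    (vb : OrthonormalBasis (Fin n) ℝ v) (zb : OrthonormalBasis (Fin m) ℝ z)
    (X Y Z : v × z) : ℝ :=
  ⟪(nabla j β X (rho j β vb zb Y) - rho j β vb zb (nabla j β X Y)).1, Z.1⟫ +
    ⟪(nabla j β X (rho j β vb zb Y) - rho j β vb zb (nabla j β X Y)).2, Z.2⟫

/-- Proposition 1.1: the covariant derivative of the Ricci tensor of a 2-step nilpotent
Lie group `(N(j), g)`. -/
theorem nablaRic_formula {n m : ℕ}
    (j : z →ₗ[ℝ] v →ₗ[ℝ] v) (β : v →ₗ[ℝ] v →ₗ[ℝ] z)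
    (hskew : ∀ (a : z) (x y : v), ⟪j a x, y⟫ = -⟪x, j a y⟫)
    (hβ : ∀ (x y : v) (c : z), ⟪β x y, c⟫ = ⟪j c x, y⟫)
    (vb : OrthonormalBasis (Fin n) ℝ v) (zb : OrthonormalBasis (Fin m) ℝ z)
    (X Y Z : v × z) :
    nablaRic j β vb zb X Y Z =
      (1/4) * ⟪j X.2 Y.1, Jmap j zb Z.1⟫ + (1/4) * ⟪j X.2 Z.1, Jmap j zb Y.1⟫
        + (1/4) * ⟪j Y.2 X.1, Jmap j zb Z.1⟫ + (1/4) * ⟪j Z.2 X.1, Jmap j zb Y.1⟫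
        - (1/8) * ⟪β X.1 Z.1, Bmap j β vb Y.2⟫ - (1/8) * ⟪β X.1 Y.1, Bmap j β vb Z.2⟫ := by
  obtain ⟨x, a⟩ := X
  obtain ⟨y, b⟩ := Y
  obtain ⟨zz, c⟩ := Z
  have hJsym : ∀ p q : v, ⟪Jmap j zb p, q⟫ = ⟪p, Jmap j zb q⟫ := by
    intro p q
    simp only [Jmap, sum_inner, inner_sum]
    refine Finset.sum_congr rfl fun k _ => ?_
    rw [hskew, hskew]; ring
  have hBsym : ∀ p q : z, ⟪Bmap j β vb p, q⟫ = ⟪p, Bmap j β vb q⟫ := by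
    intro p q
    simp only [Bmap, sum_inner, inner_sum]
    refine Finset.sum_congr rfl fun i _ => ?_
    rw [hβ]
    rw [show (⟪p, β (vb i) (j q (vb i))⟫ : ℝ) = ⟪β (vb i) (j q (vb i)), p⟫ from
      real_inner_comm _ _, hβ]
    exact real_inner_comm _ _
  have hJsub : ∀ p q : v, Jmap j zb (p - q) = Jmap j zb p - Jmap j zb q := by
    intro p q; simp [Jmap, Finset.sum_sub_distrib]
  have hJneg : ∀ p : v, Jmap j zb (-p) = -Jmap j zb p := by
    intro p; simp [Jmap, Finset.sum_neg_distrib]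
  have hJsmul : ∀ (r : ℝ) (p : v), Jmap j zb (r • p) = r • Jmap j zb p := by
    intro r p; simp [Jmap, Finset.smul_sum]
  have hBsmul : ∀ (r : ℝ) (p : z), Bmap j β vb (r • p) = r • Bmap j β vb p := by
    intro r p; simp [Bmap, Finset.smul_sum]
  simp only [nablaRic, nabla, rho, Prod.fst, Prod.snd, Prod.mk_sub_mk,
    hJsub, hJneg, hJsmul, hBsmul, map_smul, map_neg, map_sub, map_add, hJsym]
  simp only [inner_sub_left, inner_add_left, inner_neg_left, inner_smul_left,
    real_inner_smul_right, smul_smul, LinearMap.smul_apply, LinearMap.neg_apply,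
    LinearMap.sub_apply, LinearMap.add_apply, map_smul, map_neg, map_sub, map_add,
    starRingEnd_apply, star_trivial]
  have h1 : ⟪j a (Jmap j zb y), zz⟫ = -⟪j a zz, Jmap j zb y⟫ := by
    rw [hskew, real_inner_comm]
  rw [hJsym ((j a) y), hJsym ((j b) x), hBsym, hβ x y, h1, hβ x (Jmap j zb y), hβ x zz]
  ring
end

section
/- One has (∇_X ric)(X,X) = 0 for all X ∈ n if and only if the composite J ∘ j_a is a skew-adjoint endomorphism of v for every a ∈ z. (This characterizes the 2-step nilpotent Lie groups of Type A.) -/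
open scoped RealInnerProductSpace

variable {v z : Type*}
  [NormedAddCommGroup v] [InnerProductSpace ℝ v] [FiniteDimensional ℝ v]
  [NormedAddCommGroup z] [InnerProductSpace ℝ z] [FiniteDimensional ℝ z]

section Aux
variable {n m : ℕ} (j : z →ₗ[ℝ] v →ₗ[ℝ] v) (β : v →ₗ[ℝ] v →ₗ[ℝ] z)
  (vb : OrthonormalBasis (Fin n) ℝ v) (zb : OrthonormalBasis (Fin m) ℝ z)

lemma Jmap_smul (c : ℝ) (x : v) : Jmap j zb (c • x) = c • Jmap j zb x := by
  simp [Jmap, map_smul, Finset.smul_sum]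

lemma Jmap_add (x y : v) : Jmap j zb (x + y) = Jmap j zb x + Jmap j zb y := by
  simp [Jmap, map_add, Finset.sum_add_distrib]

lemma Jmap_neg (x : v) : Jmap j zb (-x) = -Jmap j zb x := by
  simp [Jmap, map_neg, Finset.sum_neg_distrib]

lemma Jmap_sub (x y : v) : Jmap j zb (x - y) = Jmap j zb x - Jmap j zb y := by
  simp [Jmap, map_sub, Finset.sum_sub_distrib]

lemma Jmap_sa (hskew : ∀ (a : z) (x y : v), ⟪j a x, y⟫ = -⟪x, j a y⟫)
    (x y : v) : ⟪Jmap j zb x, y⟫ = ⟪x, Jmap j zb y⟫ := by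
  simp only [Jmap, sum_inner, inner_sum]
  refine Finset.sum_congr rfl fun k _ => ?_
  rw [hskew, hskew, neg_neg]

lemma beta_self (hskew : ∀ (a : z) (x y : v), ⟪j a x, y⟫ = -⟪x, j a y⟫)
    (hβ : ∀ (x y : v) (c : z), ⟪β x y, c⟫ = ⟪j c x, y⟫) (x : v) :
    β x x = 0 := by
  have h : ∀ c : z, ⟪β x x, c⟫ = 0 := by
    intro c
    have h1 := hβ x x c
    have h2 := hskew c x x
    have h3 := real_inner_comm x (j c x)
    linarith
  have := h (β x x)
  simpa [real_inner_self_eq_norm_sq] using this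

lemma nablaRic_diag (hskew : ∀ (a : z) (x y : v), ⟪j a x, y⟫ = -⟪x, j a y⟫)
    (hβ : ∀ (x y : v) (c : z), ⟪β x y, c⟫ = ⟪j c x, y⟫) (x : v) (a : z) :
    nablaRic j β vb zb (x, a) (x, a) (x, a) = ⟪Jmap j zb (j a x), x⟫ := by
  simp only [nablaRic, nabla, rho, Prod.fst, Prod.snd, beta_self j β hskew hβ,
    smul_zero, map_zero, Bmap]
  simp only [Prod.mk_sub_mk, Prod.fst, Prod.snd, LinearMap.zero_apply, map_zero,
    Finset.sum_const_zero, smul_zero, sub_zero, map_smul, map_neg, map_add,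
    LinearMap.smul_apply, LinearMap.neg_apply, Jmap_smul, Jmap_add, Jmap_neg, Jmap_sub,
    inner_sub_left, inner_add_left, inner_neg_left, inner_smul_left, inner_smul_right,
    real_inner_smul_left, smul_eq_mul, RCLike.conj_to_real]
  have e1 : ⟪j (∑ i, β (vb i) (j a (vb i))) x, x⟫ = 0 := by
    have h2 := hskew (∑ i, β (vb i) (j a (vb i))) x x
    have h3 := real_inner_comm x (j (∑ i, β (vb i) (j a (vb i))) x)
    linarith
  have e2 : ⟪j a (Jmap j zb x), x⟫ = -⟪Jmap j zb (j a x), x⟫ := by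
    rw [hskew, real_inner_comm, Jmap_sa j zb hskew, real_inner_comm]
  have e3 : ⟪β x (Jmap j zb x), a⟫ = ⟪Jmap j zb (j a x), x⟫ := by
    rw [hβ, real_inner_comm, Jmap_sa j zb hskew, real_inner_comm]
  linarith
end Aux

/-- Theorem 1.3: a 2-step nilpotent Lie group `(N(j), g)` is of Type A (i.e. has cyclic
parallel Ricci tensor) if and only if `J ∘ j_a` is skew-adjoint for every `a ∈ z`. -/
theorem typeA_iff_J_comp_j_skewAdjoint {n m : ℕ}
    (j : z →ₗ[ℝ] v →ₗ[ℝ] v) (β : v →ₗ[ℝ] v →ₗ[ℝ] z)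
    (hskew : ∀ (a : z) (x y : v), ⟪j a x, y⟫ = -⟪x, j a y⟫)
    (hβ : ∀ (x y : v) (c : z), ⟪β x y, c⟫ = ⟪j c x, y⟫)
    (vb : OrthonormalBasis (Fin n) ℝ v) (zb : OrthonormalBasis (Fin m) ℝ z) :
    (∀ X : v × z, nablaRic j β vb zb X X X = 0) ↔
      (∀ (a : z) (x y : v), ⟪Jmap j zb (j a x), y⟫ = -⟪x, Jmap j zb (j a y)⟫) := by
  constructor
  · intro h a x y
    have hq : ∀ w : v, ⟪Jmap j zb (j a w), w⟫ = 0 := by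
      intro w
      have := h (w, a)
      rwa [nablaRic_diag j β vb zb hskew hβ] at this
    have hxy := hq (x + y)
    simp only [map_add, Jmap_add, inner_add_left, inner_add_right] at hxy
    have h1 := hq x
    have h2 := hq y
    have h3 := real_inner_comm (Jmap j zb (j a y)) x
    linarith
  · intro h X
    obtain ⟨x, a⟩ := X
    rw [nablaRic_diag j β vb zb hskew hβ]
    have h1 := h a x x
    have h2 := real_inner_comm (Jmap j zb (j a x)) x
    linarith
end

section
/- If J = C·Id_v for some real constant C, then (∇_X ric)(X,X) = 0 for all X ∈ n; that is, the associated 2-step nilpotent Lie group is a Type A manifold. -/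
open scoped RealInnerProductSpace

variable {v z : Type*}
  [NormedAddCommGroup v] [InnerProductSpace ℝ v] [FiniteDimensional ℝ v]
  [NormedAddCommGroup z] [InnerProductSpace ℝ z] [FiniteDimensional ℝ z]

/-- Corollary 1.4: every 2-step nilpotent Lie group with `J = C·Id_v` is a Type A
manifold. -/
theorem typeA_of_J_scalar {n m : ℕ}
    (j : z →ₗ[ℝ] v →ₗ[ℝ] v) (β : v →ₗ[ℝ] v →ₗ[ℝ] z)
    (hskew : ∀ (a : z) (x y : v), ⟪j a x, y⟫ = -⟪x, j a y⟫)
    (hβ : ∀ (x y : v) (c : z), ⟪β x y, c⟫ = ⟪j c x, y⟫)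
    (vb : OrthonormalBasis (Fin n) ℝ v) (zb : OrthonormalBasis (Fin m) ℝ z)
    (C : ℝ) (hJ : ∀ x : v, Jmap j zb x = C • x) :
    ∀ X : v × z, nablaRic j β vb zb X X X = 0 := by
  have hskew0 : ∀ (c : z) (y : v), ⟪j c y, y⟫ = 0 := by
    intro c y
    have h1 := hskew c y y
    have h2 := real_inner_comm y (j c y)
    linarith
  have hβ0 : ∀ x : v, β x x = 0 := by
    intro x
    apply ext_inner_right ℝ
    intro c
    simp [hβ, hskew0]
  rintro ⟨x, a⟩
  have hB0 : Bmap j β vb 0 = 0 := by simp [Bmap]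
  simp only [nablaRic, nabla, rho, hJ, hβ0]
  simp only [map_smul, map_zero, smul_zero, smul_smul, hβ0, hB0,
    inner_zero_left, add_zero, zero_add, map_neg, map_sub, neg_neg, smul_neg]
  simp [inner_sub_left, inner_smul_left, inner_add_left, inner_neg_left, hskew0,
    map_smul, map_add, map_neg, hβ0, hB0]
end

section
/- Suppose J = C·Id_v and B = D·Id_z for real constants C, D, and suppose j_a ≠ 0 for some a ∈ z. Then (∇_X ric)(Y,Z) = 0 for all X, Y, Z ∈ n if and only if D = 2C. (Equivalently, under these hypotheses (∇_X ric)(Y,Z) = ((2C − D)/8)(⟨j_{Y^z} X^v, Z^v⟩ + ⟨[X^v,Y^v], Z^z⟩), so the Ricci tensor is parallel exactly when D = 2C.) -/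
open scoped RealInnerProductSpace

variable {v z : Type*}
  [NormedAddCommGroup v] [InnerProductSpace ℝ v] [FiniteDimensional ℝ v]
  [NormedAddCommGroup z] [InnerProductSpace ℝ z] [FiniteDimensional ℝ z]

/-- Theorem 1.6: a 2-step nilpotent Lie group with `J = C·Id_v` and `B = D·Id_z`
(and `j ≠ 0`) has parallel Ricci tensor if and only if `D = 2C`; indeed
`(∇_X ric)(Y,Z) = ((2C − D)/8)(⟨j_{Y^z} X^v, Z^v⟩ + ⟨[X^v,Y^v], Z^z⟩)`. -/
theorem parallel_ricci_iff_D_eq_two_C {n m : ℕ}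
    (j : z →ₗ[ℝ] v →ₗ[ℝ] v) (β : v →ₗ[ℝ] v →ₗ[ℝ] z)
    (hskew : ∀ (a : z) (x y : v), ⟪j a x, y⟫ = -⟪x, j a y⟫)
    (hβ : ∀ (x y : v) (c : z), ⟪β x y, c⟫ = ⟪j c x, y⟫)
    (vb : OrthonormalBasis (Fin n) ℝ v) (zb : OrthonormalBasis (Fin m) ℝ z)
    (C D : ℝ)
    (hJ : ∀ x : v, Jmap j zb x = C • x)
    (hB : ∀ a : z, Bmap j β vb a = D • a)
    (hj : ∃ a : z, j a ≠ 0) :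
    (∀ X Y Z : v × z, nablaRic j β vb zb X Y Z =
        ((2 * C - D) / 8) * (⟪j Y.2 X.1, Z.1⟫ + ⟪β X.1 Y.1, Z.2⟫)) ∧
      ((∀ X Y Z : v × z, nablaRic j β vb zb X Y Z = 0) ↔ D = 2 * C) := by
  have key : ∀ X Y Z : v × z, nablaRic j β vb zb X Y Z =
      ((2 * C - D) / 8) * (⟪j Y.2 X.1, Z.1⟫ + ⟪β X.1 Y.1, Z.2⟫) := by
    intro X Y Z
    simp only [nablaRic, nabla, rho, hJ, hB, map_smul, LinearMap.smul_apply,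
      Prod.fst_sub, Prod.snd_sub, smul_smul, map_neg, map_sub, smul_sub, smul_neg]
    rw [inner_sub_left, inner_sub_left, inner_sub_left, inner_sub_left]
    simp only [inner_smul_left, inner_neg_left, RCLike.conj_to_real, map_add]
    ring
  refine ⟨key, ?_, fun hD X Y Z => by rw [key, hD]; ring⟩
  intro h
  obtain ⟨a, ha⟩ := hj
  obtain ⟨x, hx⟩ := DFunLike.ne_iff.mp ha
  have h2 := (key (x, 0) (0, a) (j a x, 0)).symm.trans (h (x, 0) (0, a) (j a x, 0))
  simp only [map_zero, LinearMap.zero_apply, inner_zero_left, add_zero,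
    inner_zero_right] at h2
  rcases mul_eq_zero.mp h2 with h3 | h3
  · have : 2 * C - D = 0 := by linarith [(div_eq_zero_iff.mp h3).resolve_right (by norm_num)]
    linarith
  · exact absurd h3 (inner_self_ne_zero.mpr hx)
end

section
/- If dim v ≥ 1, dim z ≥ 1 and j is of Heisenberg type, i.e. (j_a)² = −‖a‖²·Id_v for every a ∈ z, then there exist X, Y, Z ∈ n with (∇_X ric)(Y,Z) ≠ 0; that is, no generalized Heisenberg group has parallel Ricci tensor. -/
open scoped RealInnerProductSpace

variable {v z : Type*}
  [NormedAddCommGroup v] [InnerProductSpace ℝ v] [FiniteDimensional ℝ v]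
  [NormedAddCommGroup z] [InnerProductSpace ℝ z] [FiniteDimensional ℝ z]

/-- Corollary 1.7: no generalized Heisenberg group has parallel Ricci tensor. If
`dim v ≥ 1`, `dim z ≥ 1` and `(j_a)² = −‖a‖²·Id_v` for every `a ∈ z`, then the
covariant derivative of the Ricci tensor does not vanish identically. -/
theorem generalized_heisenberg_not_ricci_parallel {n m : ℕ}
    (hn : 1 ≤ n) (hm : 1 ≤ m)
    (j : z →ₗ[ℝ] v →ₗ[ℝ] v) (β : v →ₗ[ℝ] v →ₗ[ℝ] z)
    (hskew : ∀ (a : z) (x y : v), ⟪j a x, y⟫ = -⟪x, j a y⟫)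
    (hβ : ∀ (x y : v) (c : z), ⟪β x y, c⟫ = ⟪j c x, y⟫)
    (vb : OrthonormalBasis (Fin n) ℝ v) (zb : OrthonormalBasis (Fin m) ℝ z)
    (hH : ∀ (a : z) (x : v), j a (j a x) = (-‖a‖ ^ 2 : ℝ) • x) :
    ∃ X Y Z : v × z, nablaRic j β vb zb X Y Z ≠ 0 := by
  -- polarization of the Heisenberg condition
  have hpol : ∀ (a b : z) (x : v),
      j a (j b x) + j b (j a x) = (-2 * ⟪a, b⟫) • x := by
    intro a b x
    have h := hH (a + b) x
    simp only [map_add, LinearMap.add_apply, hH] at h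
    have hn2 : ‖a + b‖ ^ 2 = ‖a‖ ^ 2 + 2 * ⟪a, b⟫ + ‖b‖ ^ 2 := by
      rw [← real_inner_self_eq_norm_sq, ← real_inner_self_eq_norm_sq,
        ← real_inner_self_eq_norm_sq, inner_add_add_self, real_inner_comm b a]
      ring
    rw [hn2] at h
    linear_combination (norm := module) h
  have hib : ∀ (a b : z) (w : v), ⟪j a w, j b w⟫ = ⟪a, b⟫ * ‖w‖ ^ 2 := by
    intro a b w
    have h1 := hskew a w (j b w)
    have h2 := hskew b w (j a w)
    have h3 : ⟪w, j a (j b w) + j b (j a w)⟫ = (-2 * ⟪a, b⟫) * ‖w‖ ^ 2 := by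
      rw [hpol, real_inner_smul_right, real_inner_self_eq_norm_sq]
    rw [inner_add_right] at h3
    have hc : ⟪j a w, j b w⟫ = ⟪j b w, j a w⟫ := real_inner_comm _ _
    linarith
  -- J = -m • id
  have hJ : ∀ w : v, Jmap j zb w = (-(m : ℝ)) • w := by
    intro w
    unfold Jmap
    have hk : ∀ k, j (zb k) (j (zb k) w) = (-1 : ℝ) • w := by
      intro k
      rw [hH]
      have h1 : ‖zb k‖ = 1 := zb.orthonormal.1 k
      rw [h1]; norm_num
    rw [Finset.sum_congr rfl fun k _ => hk k]
    simp [Finset.sum_const, Finset.card_univ]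
    module
  set i0 : Fin n := ⟨0, hn⟩
  set k0 : Fin m := ⟨0, hm⟩
  set b : z := zb k0 with hbdef
  set x : v := vb i0 with hxdef
  have hbn : ‖b‖ = 1 := zb.orthonormal.1 k0
  have hxn : ‖x‖ = 1 := vb.orthonormal.1 i0
  -- B b = n • b
  have hB : Bmap j β vb b = (n : ℝ) • b := by
    apply ext_inner_right ℝ
    intro c
    unfold Bmap
    rw [sum_inner]
    have hterm : ∀ i : Fin n, ⟪β (vb i) (j b (vb i)), c⟫ = ⟪b, c⟫ := by
      intro i
      rw [hβ, hib c b (vb i), vb.orthonormal.1 i, real_inner_comm]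
      ring
    rw [Finset.sum_congr rfl fun i _ => hterm i, Finset.sum_const,
      Finset.card_univ, real_inner_smul_left]
    simp
  set w : v := j b x with hwdef
  have hw : ⟪w, w⟫ = (1 : ℝ) := by
    rw [hwdef, hib b b x, real_inner_self_eq_norm_sq, hbn, hxn]; norm_num
  have hRhoY : rho j β vb zb ((0 : v), b) = (0, ((n : ℝ)/4) • b) := by
    unfold rho Jmap
    simp [hB, smul_smul]
    module
  have hNXY : nabla j β (x, (0 : z)) ((0 : v), b) = (-((1/2 : ℝ) • w), 0) := by
    simp [nabla, hwdef]
  have hRhoN : rho j β vb zb (-((1/2 : ℝ) • w), (0 : z)) = (((m : ℝ)/4) • w, 0) := by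
    unfold rho Bmap
    simp [hJ, smul_smul]
    module
  have hNRhoY : nabla j β (x, (0 : z)) ((0 : v), ((n : ℝ)/4) • b) =
      (-(((n : ℝ)/8) • w), 0) := by
    simp [nabla, hwdef, map_smul, smul_smul]
    module
  refine ⟨(x, 0), (0, b), (w, 0), ?_⟩
  unfold nablaRic
  rw [hRhoY, hNXY, hRhoN, hNRhoY]
  simp only [Prod.fst_sub, Prod.snd_sub, inner_zero_right, sub_zero, add_zero,
    inner_sub_left, real_inner_smul_left, inner_neg_left, hw]
  have hn' : (1 : ℝ) ≤ (n : ℝ) := by exact_mod_cast hn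
  have hm' : (1 : ℝ) ≤ (m : ℝ) := by exact_mod_cast hm
  intro hcontra
  nlinarith
end

section
/- Let T : n → End(n) be a linear map satisfying equation (AS1). Then for all X, Y, Z ∈ n: (∇_X ric)(Y,Z) = −ric(T_X Y, Z) − ric(Y, T_X Z). -/
open scoped RealInnerProductSpace

variable {v z : Type*}
  [NormedAddCommGroup v] [InnerProductSpace ℝ v] [FiniteDimensional ℝ v]
  [NormedAddCommGroup z] [InnerProductSpace ℝ z] [FiniteDimensional ℝ z]

/-- The curvature `R(X,Y)Z = ∇_X(∇_Y Z) − ∇_Y(∇_X Z) − ∇_{[X,Y]} Z`, where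
`[X,Y] = (0, β(X^v, Y^v))`. -/
noncomputable def Rcurv (j : z →ₗ[ℝ] v →ₗ[ℝ] v) (β : v →ₗ[ℝ] v →ₗ[ℝ] z)
    (X Y Z : v × z) : v × z :=
  nabla j β X (nabla j β Y Z) - nabla j β Y (nabla j β X Z) -
    nabla j β ((0 : v), β X.1 Y.1) Z

/-- The Ambrose–Singer equation (AS1): `∇R` is expressed through `T`. -/
def AS1 (j : z →ₗ[ℝ] v →ₗ[ℝ] v) (β : v →ₗ[ℝ] v →ₗ[ℝ] z)
    (T : v × z →ₗ[ℝ] Module.End ℝ (v × z)) : Prop :=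
  ∀ V X Y Z : v × z,
    nabla j β V (Rcurv j β X Y Z) - Rcurv j β (nabla j β V X) Y Z -
        Rcurv j β X (nabla j β V Y) Z - Rcurv j β X Y (nabla j β V Z) =
      T V (Rcurv j β X Y Z) - Rcurv j β (T V X) Y Z -
        Rcurv j β X (T V Y) Z - Rcurv j β X Y (T V Z)

set_option linter.unusedSectionVars false in
/-- First component of the curvature tensor, expanded. -/
lemma Rcurv_fst (j : z →ₗ[ℝ] v →ₗ[ℝ] v) (β : v →ₗ[ℝ] v →ₗ[ℝ] z) (X A B : v × z) :
    (Rcurv j β X A B).1 =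
      (1/4 : ℝ) • j X.2 (j A.2 B.1) + (1/4 : ℝ) • j X.2 (j B.2 A.1)
        - (1/4 : ℝ) • j (β A.1 B.1) X.1
        - (1/4 : ℝ) • j A.2 (j X.2 B.1) - (1/4 : ℝ) • j A.2 (j B.2 X.1)
        + (1/4 : ℝ) • j (β X.1 B.1) A.1 + (1/2 : ℝ) • j (β X.1 A.1) B.1 := by
  simp only [Rcurv, nabla, Prod.fst_sub, map_add, map_sub, map_neg, map_smul,
    LinearMap.smul_apply, map_zero, LinearMap.zero_apply, smul_neg, smul_sub, smul_add, smul_smul]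
  module

set_option linter.unusedSectionVars false in
/-- Second component of the curvature tensor, expanded. -/
lemma Rcurv_snd (j : z →ₗ[ℝ] v →ₗ[ℝ] v) (β : v →ₗ[ℝ] v →ₗ[ℝ] z) (X A B : v × z) :
    (Rcurv j β X A B).2 =
      -((1/4 : ℝ) • β X.1 (j A.2 B.1)) - (1/4 : ℝ) • β X.1 (j B.2 A.1)
        + (1/4 : ℝ) • β A.1 (j X.2 B.1) + (1/4 : ℝ) • β A.1 (j B.2 X.1) := by
  simp only [Rcurv, nabla, Prod.snd_sub, map_add, map_sub, map_neg, map_smul,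
    LinearMap.smul_apply, map_zero, LinearMap.zero_apply, smul_neg, smul_sub, smul_add, smul_smul]
  module

set_option linter.unusedSectionVars false in
/-- `∇_V` as a linear endomorphism of `n = v × z`. -/
noncomputable def nablaL (j : z →ₗ[ℝ] v →ₗ[ℝ] v) (β : v →ₗ[ℝ] v →ₗ[ℝ] z)
    (V : v × z) : (v × z) →ₗ[ℝ] (v × z) where
  toFun := nabla j β V
  map_add' a b := by
    simp only [nabla, Prod.fst_add, Prod.snd_add, map_add, LinearMap.add_apply, Prod.mk_add_mk,
      smul_add]
    rw [Prod.mk.injEq]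
    constructor <;> module
  map_smul' c a := by
    simp only [nabla, Prod.smul_fst, Prod.smul_snd, map_smul, LinearMap.smul_apply,
      RingHom.id_apply, Prod.smul_mk]
    rw [Prod.mk.injEq]
    constructor <;> module

@[simp] lemma nablaL_apply (j : z →ₗ[ℝ] v →ₗ[ℝ] v) (β : v →ₗ[ℝ] v →ₗ[ℝ] z) (V X : v × z) :
    nablaL j β V X = nabla j β V X := rfl

set_option linter.unusedSectionVars false in
/-- `X ↦ R(X,A)B` as a linear endomorphism of `n = v × z`. -/
noncomputable def RcurvL (j : z →ₗ[ℝ] v →ₗ[ℝ] v) (β : v →ₗ[ℝ] v →ₗ[ℝ] z)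
    (A B : v × z) : (v × z) →ₗ[ℝ] (v × z) where
  toFun X := Rcurv j β X A B
  map_add' a b := by
    ext
    · simp only [Rcurv_fst, Prod.fst_add, Prod.snd_add, map_add, LinearMap.add_apply]
      module
    · simp only [Rcurv_snd, Prod.fst_add, Prod.snd_add, map_add, LinearMap.add_apply]
      module
  map_smul' c a := by
    ext
    · simp only [Rcurv_fst, Prod.smul_fst, Prod.smul_snd, map_smul, LinearMap.smul_apply,
        RingHom.id_apply]
      module
    · simp only [Rcurv_snd, Prod.smul_fst, Prod.smul_snd, map_smul, LinearMap.smul_apply,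
        RingHom.id_apply]
      module

@[simp] lemma RcurvL_apply (j : z →ₗ[ℝ] v →ₗ[ℝ] v) (β : v →ₗ[ℝ] v →ₗ[ℝ] z) (A B X : v × z) :
    RcurvL j β A B X = Rcurv j β X A B := rfl

/-- Contraction over the product orthonormal basis equals the trace. -/
lemma trS_eq {n m : ℕ} (vb : OrthonormalBasis (Fin n) ℝ v)
    (zb : OrthonormalBasis (Fin m) ℝ z) (G : (v × z) →ₗ[ℝ] (v × z)) :
    (∑ i, ⟪(G (vb i, (0 : z))).1, vb i⟫) + ∑ k, ⟪(G ((0 : v), zb k)).2, zb k⟫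
      = LinearMap.trace ℝ (v × z) G := by
  rw [LinearMap.trace_eq_matrix_trace ℝ (vb.toBasis.prod zb.toBasis), Matrix.trace,
    Fintype.sum_sum_type]
  have hInl : ∀ i, (vb.toBasis.prod zb.toBasis) (Sum.inl i) = (vb i, (0 : z)) := by
    intro i
    ext
    · simp [Module.Basis.prod_apply_inl_fst]
    · simp [Module.Basis.prod_apply_inl_snd]
  have hInr : ∀ k, (vb.toBasis.prod zb.toBasis) (Sum.inr k) = ((0 : v), zb k) := by
    intro k
    ext
    · simp [Module.Basis.prod_apply_inr_fst]
    · simp [Module.Basis.prod_apply_inr_snd]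
  congr 1
  · refine Finset.sum_congr rfl fun i _ => ?_
    rw [Matrix.diag_apply, LinearMap.toMatrix_apply, hInl, Module.Basis.prod_repr_inl,
      vb.coe_toBasis_repr_apply, vb.repr_apply_apply, real_inner_comm]
  · refine Finset.sum_congr rfl fun k _ => ?_
    rw [Matrix.diag_apply, LinearMap.toMatrix_apply, hInr, Module.Basis.prod_repr_inr,
      zb.coe_toBasis_repr_apply, zb.repr_apply_apply, real_inner_comm]

/-- The contraction of a commutator of endomorphisms vanishes. -/
lemma trS_comm {n m : ℕ} (vb : OrthonormalBasis (Fin n) ℝ v)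
    (zb : OrthonormalBasis (Fin m) ℝ z) (F G : (v × z) →ₗ[ℝ] (v × z)) :
    (∑ i, ⟪(F (G (vb i, (0 : z)))).1, vb i⟫) + (∑ k, ⟪(F (G ((0 : v), zb k))).2, zb k⟫)
      = (∑ i, ⟪(G (F (vb i, (0 : z)))).1, vb i⟫)
        + ∑ k, ⟪(G (F ((0 : v), zb k))).2, zb k⟫ := by
  have h1 := trS_eq vb zb (F * G)
  have h2 := trS_eq vb zb (G * F)
  simp only [Module.End.mul_apply] at h1 h2
  rw [h1, h2, LinearMap.trace_mul_comm]

set_option linter.unusedSectionVars false in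
/-- Metric compatibility of `∇`. -/
lemma nabla_metric (j : z →ₗ[ℝ] v →ₗ[ℝ] v) (β : v →ₗ[ℝ] v →ₗ[ℝ] z)
    (hskew : ∀ (a : z) (x y : v), ⟪j a x, y⟫ = -⟪x, j a y⟫)
    (hβ : ∀ (x y : v) (c : z), ⟪β x y, c⟫ = ⟪j c x, y⟫)
    (X A B : v × z) :
    ⟪(nabla j β X A).1, B.1⟫ + ⟪(nabla j β X A).2, B.2⟫
      = -(⟪A.1, (nabla j β X B).1⟫ + ⟪A.2, (nabla j β X B).2⟫) := by
  simp only [nabla, inner_sub_left, inner_sub_right, inner_neg_left, inner_neg_right,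
    real_inner_smul_left, real_inner_smul_right]
  have h1 := hskew X.2 A.1 B.1
  have h2 := hβ X.1 B.1 A.2
  have h3 := hβ X.1 A.1 B.2
  have h4 : ⟪A.2, β X.1 B.1⟫ = ⟪β X.1 B.1, A.2⟫ := real_inner_comm _ _
  have h5 : ⟪A.1, j B.2 X.1⟫ = ⟪j B.2 X.1, A.1⟫ := real_inner_comm _ _
  linarith

set_option linter.unusedSectionVars false in
/-- `Σ_i ⟨β(x, v_i), β(v_i, y)⟩ = −Σ_k ⟨j_{z_k} x, j_{z_k} y⟩`. -/
lemma beta_sq {n m : ℕ} (j : z →ₗ[ℝ] v →ₗ[ℝ] v) (β : v →ₗ[ℝ] v →ₗ[ℝ] z)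
    (hskew : ∀ (a : z) (x y : v), ⟪j a x, y⟫ = -⟪x, j a y⟫)
    (hβ : ∀ (x y : v) (c : z), ⟪β x y, c⟫ = ⟪j c x, y⟫)
    (vb : OrthonormalBasis (Fin n) ℝ v) (zb : OrthonormalBasis (Fin m) ℝ z)
    (x y : v) :
    ∑ i, ⟪β x (vb i), β (vb i) y⟫ = -∑ k, ⟪j (zb k) x, j (zb k) y⟫ := by
  have step : ∀ i : Fin n, ⟪β x (vb i), β (vb i) y⟫
      = ∑ k, -(⟪j (zb k) x, vb i⟫ * ⟪vb i, j (zb k) y⟫) := by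
    intro i
    rw [← zb.sum_inner_mul_inner (β x (vb i)) (β (vb i) y)]
    refine Finset.sum_congr rfl fun k _ => ?_
    have e1 : ⟪β x (vb i), zb k⟫ = ⟪j (zb k) x, vb i⟫ := hβ _ _ _
    have e2 : ⟪zb k, β (vb i) y⟫ = -⟪vb i, j (zb k) y⟫ := by
      rw [real_inner_comm, hβ, hskew]
    rw [e1, e2]; ring
  rw [Finset.sum_congr rfl fun i _ => step i, Finset.sum_comm, ← Finset.sum_neg_distrib]
  refine Finset.sum_congr rfl fun k _ => ?_
  rw [Finset.sum_neg_distrib, vb.sum_inner_mul_inner]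

set_option linter.unusedSectionVars false in
/-- The contraction of the curvature tensor over the product basis equals the Ricci tensor. -/
lemma trR {n m : ℕ} (j : z →ₗ[ℝ] v →ₗ[ℝ] v) (β : v →ₗ[ℝ] v →ₗ[ℝ] z)
    (hskew : ∀ (a : z) (x y : v), ⟪j a x, y⟫ = -⟪x, j a y⟫)
    (hβ : ∀ (x y : v) (c : z), ⟪β x y, c⟫ = ⟪j c x, y⟫)
    (vb : OrthonormalBasis (Fin n) ℝ v) (zb : OrthonormalBasis (Fin m) ℝ z)
    (A B : v × z) :
    (∑ i, ⟪(Rcurv j β (vb i, (0 : z)) A B).1, vb i⟫)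
        + ∑ k, ⟪(Rcurv j β ((0 : v), zb k) A B).2, zb k⟫
      = ric j β vb zb A B := by
  have e1 : ∀ i, ⟪(Rcurv j β (vb i, (0 : z)) A B).1, vb i⟫
      = (1/4 : ℝ) * ⟪j B.2 (vb i), j A.2 (vb i)⟫
        + (1/4 : ℝ) * ⟪β A.1 (vb i), β (vb i) B.1⟫
        + (1/2 : ℝ) * ⟪β B.1 (vb i), β (vb i) A.1⟫ := by
    intro i
    rw [Rcurv_fst]
    simp only [map_zero, LinearMap.zero_apply, smul_zero, zero_add, add_zero, zero_sub,
      inner_add_left, inner_sub_left, inner_neg_left, real_inner_smul_left, inner_zero_left,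
      neg_zero]
    have t1 : ⟪j (β A.1 B.1) (vb i), vb i⟫ = 0 := by
      have h := hskew (β A.1 B.1) (vb i) (vb i)
      have h2 : ⟪(vb i : v), j (β A.1 B.1) (vb i)⟫ = ⟪j (β A.1 B.1) (vb i), vb i⟫ :=
        real_inner_comm _ _
      linarith
    have t2 : ⟪j A.2 (j B.2 (vb i)), vb i⟫ = -⟪j B.2 (vb i), j A.2 (vb i)⟫ := hskew _ _ _
    have t3 : ⟪j (β (vb i) B.1) A.1, vb i⟫ = ⟪β A.1 (vb i), β (vb i) B.1⟫ := (hβ _ _ _).symm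
    have t4 : ⟪j (β (vb i) A.1) B.1, vb i⟫ = ⟪β B.1 (vb i), β (vb i) A.1⟫ := (hβ _ _ _).symm
    rw [t1, t2, t3, t4]; ring
  have e2 : ∀ k, ⟪(Rcurv j β ((0 : v), zb k) A B).2, zb k⟫
      = (1/4 : ℝ) * ⟪j (zb k) A.1, j (zb k) B.1⟫ := by
    intro k
    rw [Rcurv_snd]
    simp only [map_zero, LinearMap.zero_apply, smul_zero, zero_add, add_zero, zero_sub,
      neg_zero, map_zero, inner_add_left, inner_sub_left, inner_neg_left, real_inner_smul_left]
    rw [hβ]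
  have e3 : ric j β vb zb A B
      = (1/2 : ℝ) * (-∑ k, ⟪j (zb k) A.1, j (zb k) B.1⟫)
        + (1/4 : ℝ) * ∑ i, ⟪j B.2 (vb i), j A.2 (vb i)⟫ := by
    simp only [ric, rho, Jmap, Bmap, real_inner_smul_left, sum_inner]
    have p1 : ∀ k : Fin m, ⟪j (zb k) (j (zb k) A.1), B.1⟫ = -⟪j (zb k) A.1, j (zb k) B.1⟫ :=
      fun k => hskew _ _ _
    have p2 : ∀ i : Fin n, ⟪β (vb i) (j A.2 (vb i)), B.2⟫ = ⟪j B.2 (vb i), j A.2 (vb i)⟫ :=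
      fun i => hβ _ _ _
    rw [Finset.sum_congr rfl fun k _ => p1 k, Finset.sum_congr rfl fun i _ => p2 i,
      Finset.sum_neg_distrib]
  rw [Finset.sum_congr rfl fun i _ => e1 i, Finset.sum_congr rfl fun k _ => e2 k, e3]
  rw [Finset.sum_add_distrib, Finset.sum_add_distrib, ← Finset.mul_sum, ← Finset.mul_sum,
    ← Finset.mul_sum, ← Finset.mul_sum]
  rw [beta_sq j β hskew hβ vb zb A.1 B.1, beta_sq j β hskew hβ vb zb B.1 A.1]
  have comm : ∑ k, ⟪j (zb k) B.1, j (zb k) A.1⟫ = ∑ k, ⟪j (zb k) A.1, j (zb k) B.1⟫ :=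
    Finset.sum_congr rfl fun k _ => real_inner_comm _ _
  rw [comm]
  ring

/-- Contracting the Ambrose–Singer equation (AS1):
`(∇_X ric)(Y,Z) = −ric(T_X Y, Z) − ric(Y, T_X Z)`. -/
theorem nablaRic_eq_of_AS1 {n m : ℕ}
    (j : z →ₗ[ℝ] v →ₗ[ℝ] v) (β : v →ₗ[ℝ] v →ₗ[ℝ] z)
    (hskew : ∀ (a : z) (x y : v), ⟪j a x, y⟫ = -⟪x, j a y⟫)
    (hβ : ∀ (x y : v) (c : z), ⟪β x y, c⟫ = ⟪j c x, y⟫)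
    (vb : OrthonormalBasis (Fin n) ℝ v) (zb : OrthonormalBasis (Fin m) ℝ z)
    (T : v × z →ₗ[ℝ] Module.End ℝ (v × z)) (hT : AS1 j β T) :
    ∀ X Y Z : v × z,
      nablaRic j β vb zb X Y Z = -ric j β vb zb (T X Y) Z - ric j β vb zb Y (T X Z) := by
  intro X Y Z
  -- contract AS1 over the product basis
  have contracted :
      ric j β vb zb (nabla j β X Y) Z + ric j β vb zb Y (nabla j β X Z)
        = ric j β vb zb (T X Y) Z + ric j β vb zb Y (T X Z) := by
    have hsum :
        (∑ i, ⟪((nabla j β X (Rcurv j β (vb i, (0:z)) Y Z)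
            - Rcurv j β (nabla j β X (vb i, (0:z))) Y Z
            - Rcurv j β (vb i, (0:z)) (nabla j β X Y) Z
            - Rcurv j β (vb i, (0:z)) Y (nabla j β X Z))).1, vb i⟫)
          + ∑ k, ⟪((nabla j β X (Rcurv j β ((0:v), zb k) Y Z)
            - Rcurv j β (nabla j β X ((0:v), zb k)) Y Z
            - Rcurv j β ((0:v), zb k) (nabla j β X Y) Z
            - Rcurv j β ((0:v), zb k) Y (nabla j β X Z))).2, zb k⟫
        = (∑ i, ⟪((T X (Rcurv j β (vb i, (0:z)) Y Z)
            - Rcurv j β (T X (vb i, (0:z))) Y Z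
            - Rcurv j β (vb i, (0:z)) (T X Y) Z
            - Rcurv j β (vb i, (0:z)) Y (T X Z))).1, vb i⟫)
          + ∑ k, ⟪((T X (Rcurv j β ((0:v), zb k) Y Z)
            - Rcurv j β (T X ((0:v), zb k)) Y Z
            - Rcurv j β ((0:v), zb k) (T X Y) Z
            - Rcurv j β ((0:v), zb k) Y (T X Z))).2, zb k⟫ := by
      congr 1
      · exact Finset.sum_congr rfl fun i _ => by rw [hT X (vb i, (0:z)) Y Z]
      · exact Finset.sum_congr rfl fun k _ => by rw [hT X ((0:v), zb k) Y Z]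
    simp only [Prod.fst_sub, Prod.snd_sub, inner_sub_left, Finset.sum_sub_distrib] at hsum
    have hc1 := trS_comm vb zb (nablaL j β X) (RcurvL j β Y Z)
    have hc2 := trS_comm vb zb (T X) (RcurvL j β Y Z)
    simp only [nablaL_apply, RcurvL_apply] at hc1 hc2
    have hr1 := trR j β hskew hβ vb zb (nabla j β X Y) Z
    have hr2 := trR j β hskew hβ vb zb Y (nabla j β X Z)
    have hr3 := trR j β hskew hβ vb zb (T X Y) Z
    have hr4 := trR j β hskew hβ vb zb Y (T X Z)
    linarith
  -- rewrite nablaRic via metric compatibility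
  have hm := nabla_metric j β hskew hβ X (rho j β vb zb Y) Z
  have expand : nablaRic j β vb zb X Y Z
      = -(ric j β vb zb Y (nabla j β X Z)) - ric j β vb zb (nabla j β X Y) Z := by
    simp only [nablaRic, Prod.fst_sub, Prod.snd_sub, inner_sub_left]
    have : ric j β vb zb Y (nabla j β X Z)
        = ⟪(rho j β vb zb Y).1, (nabla j β X Z).1⟫
          + ⟪(rho j β vb zb Y).2, (nabla j β X Z).2⟫ := rfl
    simp only [ric] at *
    linarith
  rw [expand]
  linarith
end

section
/- With e_1, e_2, e_3 the standard orthonormal basis of ℝ³ and w_1,…,w_6 the standard orthonormal basis of ℝ⁶: Σ_{k=1}^3 j_{e_k} ∘ j_{e_k} = −2·Id_{ℝ⁶} and Σ_{i=1}^6 β(w_i, j_a w_i) = 4a for all a ∈ ℝ³; and likewise Σ_{k=1}^3 j'_{e_k} ∘ j'_{e_k} = −2·Id_{ℝ⁶} and Σ_{i=1}^6 β'(w_i, j'_a w_i) = 4a for all a ∈ ℝ³. That is, J = −2·Id and B = 4·Id for both n(j) and n(j'). -/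
abbrev V3 : Type := Fin 3 → ℝ
abbrev V6 : Type := V3 × V3

/-- The pure quaternion `c₁ i + c₂ j + c₃ k` associated to `c = (c₁,c₂,c₃) ∈ ℝ³`. -/
def toQ (c : V3) : Quaternion ℝ := ⟨0, c 0, c 1, c 2⟩

/-- The vector in `ℝ³` formed by the imaginary (pure) part of a quaternion. -/
def imQ (q : Quaternion ℝ) : V3 := ![q.imI, q.imJ, q.imK]

/-- `j_C(L,R) = (Im(C·L), Im(C·R))`. -/
noncomputable def jFun (C : V3) (x : V6) : V6 := (imQ (toQ C * toQ x.1), imQ (toQ C * toQ x.2))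

/-- `j'_C(L,R) = (Im(R·C), Im(L·C))`. -/
noncomputable def j'Fun (C : V3) (x : V6) : V6 := (imQ (toQ x.2 * toQ C), imQ (toQ x.1 * toQ C))

/-- The standard inner product on `ℝ³`. -/
def dot3 (a b : V3) : ℝ := ∑ i, a i * b i

/-- The standard inner product on `ℝ⁶ = ℝ³ × ℝ³`. -/
def dot6 (x y : V6) : ℝ := dot3 x.1 y.1 + dot3 x.2 y.2

/-- The standard orthonormal basis of `ℝ³`. -/
def e3 (k : Fin 3) : V3 := Pi.single k 1

/-- The standard orthonormal basis of `ℝ⁶ = ℝ³ × ℝ³`. -/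
def w6 : Fin 6 → V6 :=
  ![(e3 0, 0), (e3 1, 0), (e3 2, 0), (0, e3 0), (0, e3 1), (0, e3 2)]
lemma dot3_e3 (v : V3) (k : Fin 3) : dot3 v (e3 k) = v k := by
  fin_cases k <;> simp [dot3, e3, Fin.sum_univ_three, Pi.single_apply]

lemma w6_0 : w6 0 = (e3 0, 0) := rfl
lemma w6_1 : w6 1 = (e3 1, 0) := rfl
lemma w6_2 : w6 2 = (e3 2, 0) := rfl
lemma w6_3 : w6 3 = (0, e3 0) := rfl
lemma w6_4 : w6 4 = (0, e3 1) := rfl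
lemma w6_5 : w6 5 = (0, e3 2) := rfl

lemma toQ_mul_toQ (a b : V3) : toQ a * toQ b =
    ⟨-(a 0 * b 0) - a 1 * b 1 - a 2 * b 2, a 1 * b 2 - a 2 * b 1,
      a 2 * b 0 - a 0 * b 2, a 0 * b 1 - a 1 * b 0⟩ := by
  ext <;> simp only [Quaternion.re_mul, Quaternion.imI_mul, Quaternion.imJ_mul, Quaternion.imK_mul] <;> simp [toQ] <;> ring

set_option maxHeartbeats 2000000 in
/-- For both `n(j)` and `n(j')` one has `J = −2·Id` and `B = 4·Id`. -/
theorem J_eq_neg_two_id_and_B_eq_four_id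
    (β β' : V6 → V6 → V3)
    (hβ : ∀ (x y : V6) (c : V3), dot3 (β x y) c = dot6 (jFun c x) y)
    (hβ' : ∀ (x y : V6) (c : V3), dot3 (β' x y) c = dot6 (j'Fun c x) y) :
    (∀ x : V6, ∑ k : Fin 3, jFun (e3 k) (jFun (e3 k) x) = (-2 : ℝ) • x) ∧
      (∀ a : V3, ∑ i : Fin 6, β (w6 i) (jFun a (w6 i)) = (4 : ℝ) • a) ∧
      (∀ x : V6, ∑ k : Fin 3, j'Fun (e3 k) (j'Fun (e3 k) x) = (-2 : ℝ) • x) ∧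
      (∀ a : V3, ∑ i : Fin 6, β' (w6 i) (j'Fun a (w6 i)) = (4 : ℝ) • a) := by
  have hc : ∀ (x y : V6) (k : Fin 3), β x y k = dot6 (jFun (e3 k) x) y := by
    intro x y k; rw [← dot3_e3 (β x y) k, hβ]
  have hc' : ∀ (x y : V6) (k : Fin 3), β' x y k = dot6 (j'Fun (e3 k) x) y := by
    intro x y k; rw [← dot3_e3 (β' x y) k, hβ']
  refine ⟨?_, ?_, ?_, ?_⟩
  · intro x
    refine Prod.ext ?_ ?_ <;> funext i <;>
      fin_cases i <;>
      simp [Fin.sum_univ_three, jFun, imQ, toQ_mul_toQ, e3, Pi.single_apply] <;> ring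
  · intro a
    funext k
    rw [Finset.sum_apply]
    simp only [Fin.sum_univ_six, hc, w6_0, w6_1, w6_2, w6_3, w6_4, w6_5]
    fin_cases k <;>
      simp [dot6, dot3, Fin.sum_univ_three, jFun, imQ, toQ_mul_toQ, e3, Pi.single_apply] <;> ring
  · intro x
    refine Prod.ext ?_ ?_ <;> funext i <;>
      fin_cases i <;>
      simp [Fin.sum_univ_three, j'Fun, imQ, toQ_mul_toQ, e3, Pi.single_apply] <;> ring
  · intro a
    funext k
    rw [Finset.sum_apply]
    simp only [Fin.sum_univ_six, hc', w6_0, w6_1, w6_2, w6_3, w6_4, w6_5]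
    fin_cases k <;>
      simp [dot6, dot3, Fin.sum_univ_three, j'Fun, imQ, toQ_mul_toQ, e3, Pi.single_apply] <;> ring
end

section
/- If a, b ∈ ℝ³ are linearly independent, then for every t ∈ ℝ³ one has j'_a ∘ j'_b − j'_b ∘ j'_a ≠ j'_t. In particular, there is no bilinear map T̃ : ℝ³ × ℝ³ → ℝ³ with j'_a ∘ j'_b − j'_b ∘ j'_a = j'_{T̃(a,b)} for all a, b ∈ ℝ³. -/
lemma key_lemma (a b t : V3)
    (h : ∀ x : V6, j'Fun a (j'Fun b x) - j'Fun b (j'Fun a x) = j'Fun t x) :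
    (dot3 a b) • a + (-(dot3 a a)) • b = 0 := by
  have key := h (a, (0:V3))
  funext i
  have h1 : (j'Fun a (j'Fun b (a, (0:V3))) - j'Fun b (j'Fun a (a, (0:V3)))).1 i
      = (j'Fun t (a, (0:V3))).1 i := by rw [key]
  fin_cases i <;>
    simp [j'Fun, imQ, Quaternion.imI_mul, Quaternion.imJ_mul, Quaternion.imK_mul] at h1 ⊢ <;>
    simp [toQ, dot3, Fin.sum_univ_three, Quaternion.ext_iff] at h1 ⊢ <;>
    ring_nf at h1 ⊢ <;> linarith

lemma main_part : ∀ a b : V3, LinearIndependent ℝ ![a, b] →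
    ∀ t : V3, ¬ (∀ x : V6, j'Fun a (j'Fun b x) - j'Fun b (j'Fun a x) = j'Fun t x) := by
  intro a b hab t h
  obtain ⟨hs, ht⟩ := LinearIndependent.pair_iff.mp hab _ _ (key_lemma a b t h)
  have ha : dot3 a a = 0 := by linarith [neg_eq_zero.mp ht]
  have ha0 : a = 0 := by
    simp [dot3, Fin.sum_univ_three] at ha
    have e0 : a 0 = 0 := by nlinarith [sq_nonneg (a 0), sq_nonneg (a 1), sq_nonneg (a 2)]
    have e1 : a 1 = 0 := by nlinarith [sq_nonneg (a 0), sq_nonneg (a 1), sq_nonneg (a 2)]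
    have e2 : a 2 = 0 := by nlinarith [sq_nonneg (a 0), sq_nonneg (a 1), sq_nonneg (a 2)]
    funext i
    fin_cases i
    · simpa using e0
    · simpa using e1
    · simpa using e2
  have := LinearIndependent.pair_iff.mp hab 1 0 (by simp [ha0])
  simp at this

/-- If `a, b ∈ ℝ³` are linearly independent then `j'_a ∘ j'_b − j'_b ∘ j'_a ≠ j'_t` for
every `t`; in particular there is no bilinear map `T̃` with
`j'_a ∘ j'_b − j'_b ∘ j'_a = j'_{T̃(a,b)}` for all `a, b`. -/
theorem j'Fun_commutator_not_j' :
    (∀ a b : V3, LinearIndependent ℝ ![a, b] →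
      ∀ t : V3, ¬ (∀ x : V6, j'Fun a (j'Fun b x) - j'Fun b (j'Fun a x) = j'Fun t x)) ∧
      ¬ ∃ Tt : V3 →ₗ[ℝ] V3 →ₗ[ℝ] V3,
        ∀ (a b : V3) (x : V6),
          j'Fun a (j'Fun b x) - j'Fun b (j'Fun a x) = j'Fun (Tt a b) x := by
  refine ⟨main_part, ?_⟩
  rintro ⟨Tt, hT⟩
  have hli : LinearIndependent ℝ ![(![1,0,0] : V3), (![0,1,0] : V3)] := by
    rw [LinearIndependent.pair_iff]
    intro s t hst
    constructor
    · have := congrFun hst 0; simpa using this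
    · have := congrFun hst 1; simpa using this
  exact main_part _ _ hli (Tt ![1,0,0] ![0,1,0]) (hT _ _)
end

section
/- Every abelian Lie subalgebra of n(j) (a subspace on which the bracket of any two elements vanishes) has dimension at most 5. -/
/-- The cross product on `ℝ³`. -/
def cr (a b : V3) : V3 :=
  ![a 1 * b 2 - a 2 * b 1, a 2 * b 0 - a 0 * b 2, a 0 * b 1 - a 1 * b 0]

lemma cr_zero_left (b : V3) : cr 0 b = 0 := by
  funext i; fin_cases i <;> simp [cr]

lemma cr_zero_right (a : V3) : cr a 0 = 0 := by
  funext i; fin_cases i <;> simp [cr]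

lemma parallel {R S : V3} (hR : R ≠ 0) (h : cr R S = 0) : ∃ c : ℝ, S = c • R := by
  have h0 := congrFun h 0
  have h1 := congrFun h 1
  have h2 := congrFun h 2
  simp [cr] at h0 h1 h2
  obtain ⟨i, hi⟩ := Function.ne_iff.mp hR
  fin_cases i
  · have hr : R 0 ≠ 0 := by simpa using hi
    refine ⟨S 0 / R 0, funext fun j => ?_⟩
    fin_cases j
    · simp; field_simp
    · simp; field_simp; linear_combination h2
    · simp; field_simp; linear_combination -h1
  · have hr : R 1 ≠ 0 := by simpa using hi
    refine ⟨S 1 / R 1, funext fun j => ?_⟩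
    fin_cases j
    · simp; field_simp; linear_combination -h2
    · simp; field_simp
    · simp; field_simp; linear_combination h0
  · have hr : R 2 ≠ 0 := by simpa using hi
    refine ⟨S 2 / R 2, funext fun j => ?_⟩
    fin_cases j
    · simp; field_simp; linear_combination h1
    · simp; field_simp; linear_combination -h0
    · simp; field_simp

/-- A subspace of `ℝ⁶` which is totally isotropic for `β(x,y) = x₁×y₁ + x₂×y₂`
has dimension at most 2. -/
lemma Ulem (U : Submodule ℝ V6)
    (hU : ∀ x ∈ U, ∀ y ∈ U, cr x.1 y.1 + cr x.2 y.2 = 0) :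
    Module.finrank ℝ U ≤ 2 := by
  by_contra hc
  push_neg at hc
  have hc3 : 3 ≤ Module.finrank ℝ U := hc
  set f : U →ₗ[ℝ] V3 := (LinearMap.fst ℝ V3 V3).comp U.subtype with hf
  set g : U →ₗ[ℝ] V3 := (LinearMap.snd ℝ V3 V3).comp U.subtype with hg
  rcases eq_or_ne (LinearMap.ker f) ⊥ with hker | hker
  · -- f is injective, so `U` is the graph of a linear map `φ : ℝ³ → ℝ³` with
    -- `φ(L) × φ(L') = -L × L'`, which is impossible.
    have hrn := LinearMap.finrank_range_add_finrank_ker f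
    rw [hker, finrank_bot, add_zero] at hrn
    have h3 : Module.finrank ℝ (LinearMap.range f) = 3 := by
      have hle : Module.finrank ℝ (LinearMap.range f) ≤ 3 := by
        simpa using Submodule.finrank_le (LinearMap.range f)
      omega
    have htop : LinearMap.range f = ⊤ :=
      Submodule.eq_top_of_finrank_eq (by simp [h3, Module.finrank_fin_fun])
    have hmem : ∀ v : V3, ∃ u : U, f u = v := fun v => by
      have : v ∈ LinearMap.range f := htop ▸ Submodule.mem_top
      exact this
    obtain ⟨u1, hu1⟩ := hmem ![1,0,0]
    obtain ⟨u2, hu2⟩ := hmem ![0,1,0]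
    obtain ⟨u3, hu3⟩ := hmem ![0,0,1]
    set a := ((u1 : V6)).2 with ha
    set b := ((u2 : V6)).2 with hb
    set c := ((u3 : V6)).2 with hcc
    have e12 := hU _ u1.2 _ u2.2
    have e23 := hU _ u2.2 _ u3.2
    have e31 := hU _ u3.2 _ u1.2
    have hfu1 : ((u1 : V6)).1 = ![1,0,0] := hu1
    have hfu2 : ((u2 : V6)).1 = ![0,1,0] := hu2
    have hfu3 : ((u3 : V6)).1 = ![0,0,1] := hu3
    rw [hfu1, hfu2, ← ha, ← hb] at e12
    rw [hfu2, hfu3, ← hb, ← hcc] at e23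
    rw [hfu3, hfu1, ← hcc, ← ha] at e31
    have p1 := congrFun e12 0; have p2 := congrFun e12 1; have p3 := congrFun e12 2
    have q1 := congrFun e23 0; have q2 := congrFun e23 1; have q3 := congrFun e23 2
    have r1 := congrFun e31 0; have r2 := congrFun e31 1; have r3 := congrFun e31 2
    simp [cr] at p1 p2 p3 q1 q2 q3 r1 r2 r3
    have ha2 : a 2 = 0 := by linear_combination (a 0) * p1 + (a 1) * p2 + (a 2) * p3
    have ha1 : a 1 = 0 := by linear_combination (a 0) * r1 + (a 1) * r2 + (a 2) * r3
    have hb2 : b 2 = 0 := by linear_combination (b 0) * p1 + (b 1) * p2 + (b 2) * p3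
    have hb0 : b 0 = 0 := by linear_combination (b 0) * q1 + (b 1) * q2 + (b 2) * q3
    have hc0 : c 0 = 0 := by linear_combination (c 0) * q1 + (c 1) * q2 + (c 2) * q3
    have hc1 : c 1 = 0 := by linear_combination (c 0) * r1 + (c 1) * r2 + (c 2) * r3
    have k1 : a 0 * b 1 = -1 := by linear_combination p3 + b 0 * ha1
    have k2 : b 1 * c 2 = -1 := by linear_combination q1 + c 1 * hb2
    have k3 : c 2 * a 0 = -1 := by linear_combination r2 + a 2 * hc0
    have hsq : (a 0 * b 1 * c 2) ^ 2 = -1 := by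
      have h12 : (a 0 * b 1) * (b 1 * c 2) * (c 2 * a 0) = (-1) * (-1) * (-1) := by
        rw [k1, k2, k3]
      linear_combination h12
    linarith [sq_nonneg (a 0 * b 1 * c 2), hsq]
  · -- f has a kernel: there is `(0, R) ∈ U` with `R ≠ 0`; then all second
    -- components lie on the line `ℝR`, and the kernel of the second projection
    -- is at most a line too, so `dim U ≤ 2`.
    obtain ⟨v, hvker, hv0⟩ := (Submodule.ne_bot_iff _).mp hker
    have hv1 : ((v : V6)).1 = 0 := LinearMap.mem_ker.mp hvker
    have hR : ((v : V6)).2 ≠ 0 := by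
      intro h2
      exact hv0 (Subtype.ext (Prod.ext hv1 h2))
    have hrange : LinearMap.range g ≤ Submodule.span ℝ {((v : V6)).2} := by
      rintro s ⟨y, rfl⟩
      have e := hU _ v.2 _ y.2
      rw [hv1, cr_zero_left, zero_add] at e
      obtain ⟨d, hd⟩ := parallel hR e
      exact Submodule.mem_span_singleton.mpr ⟨d, hd.symm⟩
    have hrange1 : Module.finrank ℝ (LinearMap.range g) ≤ 1 := by
      calc Module.finrank ℝ (LinearMap.range g)
          ≤ Module.finrank ℝ (Submodule.span ℝ {((v : V6)).2}) :=
            Submodule.finrank_mono hrange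
        _ = 1 := finrank_span_singleton hR
    have hker1 : Module.finrank ℝ (LinearMap.ker g) ≤ 1 := by
      rcases eq_or_ne (LinearMap.ker g) ⊥ with hkg | hkg
      · rw [hkg, finrank_bot]; omega
      · obtain ⟨w, hwker, hw0⟩ := (Submodule.ne_bot_iff _).mp hkg
        have hw2 : ((w : V6)).2 = 0 := LinearMap.mem_ker.mp hwker
        have hL : ((w : V6)).1 ≠ 0 := by
          intro h1
          exact hw0 (Subtype.ext (Prod.ext h1 hw2))
        have hle : LinearMap.ker g ≤ Submodule.span ℝ {w} := by
          intro z hz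
          have hz2 : ((z : V6)).2 = 0 := LinearMap.mem_ker.mp hz
          have e := hU _ w.2 _ z.2
          rw [hw2, hz2, cr_zero_left, add_zero] at e
          obtain ⟨d, hd⟩ := parallel hL e
          refine Submodule.mem_span_singleton.mpr ⟨d, ?_⟩
          apply Subtype.ext
          have : ((d • w : U) : V6) = d • ((w : V6)) := rfl
          rw [this]
          refine (Prod.ext ?_ ?_).symm
          · exact hd
          · simp [hz2, hw2]
        calc Module.finrank ℝ (LinearMap.ker g)
            ≤ Module.finrank ℝ (Submodule.span ℝ {w}) := Submodule.finrank_mono hle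
          _ = 1 := finrank_span_singleton hw0
    have hrn := LinearMap.finrank_range_add_finrank_ker g
    omega

lemma beta_eq (β : V6 → V6 → V3)
    (hβ : ∀ (x y : V6) (c : V3), dot3 (β x y) c = dot6 (jFun c x) y)
    (x y : V6) : β x y = cr x.1 y.1 + cr x.2 y.2 := by
  funext i
  fin_cases i
  · have h := hβ x y ![1,0,0]
    simp only [dot3, dot6, jFun, imQ, Fin.sum_univ_three, Quaternion.imI_mul,
      Quaternion.imJ_mul, Quaternion.imK_mul] at h
    simp [toQ] at h
    simp [cr]
    linarith
  · have h := hβ x y ![0,1,0]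
    simp only [dot3, dot6, jFun, imQ, Fin.sum_univ_three, Quaternion.imI_mul,
      Quaternion.imJ_mul, Quaternion.imK_mul] at h
    simp [toQ] at h
    simp [cr]
    linarith
  · have h := hβ x y ![0,0,1]
    simp only [dot3, dot6, jFun, imQ, Fin.sum_univ_three, Quaternion.imI_mul,
      Quaternion.imJ_mul, Quaternion.imK_mul] at h
    simp [toQ] at h
    simp [cr]
    linarith

/-- Every abelian Lie subalgebra of `n(j)` — a subspace on which the bracket
`[(x,a),(y,b)] = (0, β(x,y))` of any two elements vanishes — has dimension at most 5. -/
theorem abelian_subalgebra_dim_le_five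
    (β : V6 → V6 → V3)
    (hβ : ∀ (x y : V6) (c : V3), dot3 (β x y) c = dot6 (jFun c x) y)
    (W : Submodule ℝ (V6 × V3))
    (hW : ∀ X ∈ W, ∀ Y ∈ W, (((0 : V6), β X.1 Y.1) : V6 × V3) = 0) :
    Module.finrank ℝ W ≤ 5 := by
  have hβ' : ∀ X ∈ W, ∀ Y ∈ W, cr X.1.1 Y.1.1 + cr X.1.2 Y.1.2 = 0 := by
    intro X hX Y hY
    have h := hW X hX Y hY
    have h2 : β X.1 Y.1 = 0 := congrArg Prod.snd h
    rw [← beta_eq β hβ X.1 Y.1]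
    exact h2
  set Φ : W →ₗ[ℝ] V6 := (LinearMap.fst ℝ V6 V3).comp W.subtype with hΦ
  have hU : ∀ x ∈ LinearMap.range Φ, ∀ y ∈ LinearMap.range Φ,
      cr x.1 y.1 + cr x.2 y.2 = 0 := by
    rintro x ⟨X, rfl⟩ y ⟨Y, rfl⟩
    exact hβ' _ X.2 _ Y.2
  have hU2 : Module.finrank ℝ (LinearMap.range Φ) ≤ 2 := Ulem _ hU
  have hker : Module.finrank ℝ (LinearMap.ker Φ) ≤ 3 := by
    set ψ : LinearMap.ker Φ →ₗ[ℝ] V3 :=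
      ((LinearMap.snd ℝ V6 V3).comp W.subtype).comp (LinearMap.ker Φ).subtype with hψ
    have hinj : Function.Injective ψ := by
      intro z z' hzz
      have h1 : ((z : W) : V6 × V3).1 = ((z' : W) : V6 × V3).1 := by
        have hz := LinearMap.mem_ker.mp z.2
        have hz' := LinearMap.mem_ker.mp z'.2
        show Φ z.1 = Φ z'.1
        rw [hz, hz']
      exact Subtype.ext (Subtype.ext (Prod.ext h1 hzz))
    calc Module.finrank ℝ (LinearMap.ker Φ)
        ≤ Module.finrank ℝ V3 := LinearMap.finrank_le_finrank_of_injective hinj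
      _ = 3 := Module.finrank_fin_fun ℝ
  have hrn := LinearMap.finrank_range_add_finrank_ker Φ
  omega
end

section
/- The Lie algebras n(j) and n(j') are not isomorphic: there is no ℝ-linear bijection φ : n(j) → n(j') with φ([X,Y]) = [φ(X),φ(Y)]' for all X, Y. -/
open Matrix Module Submodule


-- the bilinear form
noncomputable def Bf : V6 →ₗ[ℝ] V6 →ₗ[ℝ] V3 :=
  LinearMap.mk₂ ℝ (fun x y => crossProduct x.1 y.1 + crossProduct x.2 y.2)
    (by intros; simp [Prod.fst_add, Prod.snd_add, map_add, LinearMap.add_apply]; abel)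
    (by intros; simp [Prod.smul_fst, Prod.smul_snd, _root_.map_smul, LinearMap.smul_apply, smul_add])
    (by intros; simp [map_add]; abel)
    (by intros; simp [_root_.map_smul, smul_add])

lemma Bf_apply (x y : V6) : Bf x y = crossProduct x.1 y.1 + crossProduct x.2 y.2 := rfl

lemma Bf_self (x : V6) : Bf x x = 0 := by simp [Bf_apply]

lemma Bf_skew (x y : V6) : Bf y x = - Bf x y := by
  rw [Bf_apply, Bf_apply, neg_add, cross_anticomm, cross_anticomm]

lemma det_eq_zero_of_adj (M N : Matrix (Fin 3) (Fin 3) ℝ)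
    (h : adjugate M = - adjugate N) : M.det = 0 := by
  by_contra hd
  have h2 : M * adjugate M = M.det • 1 := mul_adjugate M
  have h1 : N * adjugate M = (-N.det) • 1 := by
    rw [h, Matrix.mul_neg, mul_adjugate, neg_smul]
  have h3 : (N.det • M + M.det • N) * adjugate M = 0 := by
    rw [add_mul, smul_mul_assoc, smul_mul_assoc, h1, h2, smul_smul, smul_smul]
    rw [← add_smul]
    ring_nf
    simp
  have hAdet : IsUnit (adjugate M).det := by
    rw [det_adjugate]
    simpa using isUnit_iff_ne_zero.mpr (pow_ne_zero 2 hd)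
  have h4 : N.det • M + M.det • N = 0 := by
    have := congrArg (fun A => A * (adjugate M)⁻¹) h3
    simpa [Matrix.mul_assoc, Matrix.mul_nonsing_inv _ hAdet] using this
  have h5 : N = (-(N.det) / M.det) • M := by
    have e1 : M.det • N = (-N.det) • M := by
      rw [neg_smul, ← add_eq_zero_iff_eq_neg, add_comm]; exact h4
    have e2 := congrArg (fun A => (M.det)⁻¹ • A) e1
    simp only [smul_smul, inv_mul_cancel₀ hd, one_smul] at e2
    conv_lhs => rw [e2]
    congr 1
    ring
  have h6 : N.det = (-(N.det) / M.det) ^ 3 * M.det := by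
    conv_lhs => rw [h5]
    rw [Matrix.det_smul]
    norm_num
  have h7 : N.det * (M.det ^ 2 + N.det ^ 2) = 0 := by
    have h6' : N.det * M.det ^ 3 = (-N.det) ^ 3 * M.det := by
      field_simp at h6; linear_combination M.det * h6
    have h8 : M.det * (N.det * (M.det ^ 2 + N.det ^ 2)) = 0 := by ring_nf; linarith [h6']
    exact (mul_eq_zero.mp h8).resolve_left hd
  have hN0 : N.det = 0 := by
    rcases mul_eq_zero.mp h7 with h' | h'
    · exact h'
    · have : M.det ^ 2 > 0 := by positivity
      nlinarith [sq_nonneg N.det]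
  have hN : N = 0 := by rw [h5, hN0]; simp
  rw [hN] at h
  simp at h
  have := det_adjugate M
  rw [h] at this
  simp at this
  exact hd (pow_eq_zero_iff (by norm_num) |>.mp this.symm)

lemma parallel_of_cross_eq_zero {r s : V3} (hr : r ≠ 0) (h : crossProduct r s = 0) :
    ∃ t : ℝ, s = t • r := by
  have h0 := congrFun h 0
  have h1 := congrFun h 1
  have h2 := congrFun h 2
  simp [cross_apply] at h0 h1 h2
  have hex : ∃ i, r i ≠ 0 := by
    by_contra hc
    push_neg at hc
    exact hr (funext fun i => hc i)
  obtain ⟨i, hi⟩ := hex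
  fin_cases i
  · have hi' : r 0 ≠ 0 := hi
    refine ⟨s 0 / r 0, funext fun j => ?_⟩
    fin_cases j <;> simp only [Pi.smul_apply, smul_eq_mul, Fin.reduceFinMk, Fin.mk_zero, Fin.mk_one]
    · field_simp
    · rw [div_mul_eq_mul_div, eq_comm, div_eq_iff hi', mul_comm (s 0)]
      linear_combination -h2
    · rw [div_mul_eq_mul_div, eq_comm, div_eq_iff hi', mul_comm (s 0)]
      linear_combination h1
  · have hi' : r 1 ≠ 0 := hi
    refine ⟨s 1 / r 1, funext fun j => ?_⟩
    fin_cases j <;> simp only [Pi.smul_apply, smul_eq_mul, Fin.reduceFinMk, Fin.mk_zero, Fin.mk_one]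
    · rw [div_mul_eq_mul_div, eq_comm, div_eq_iff hi', mul_comm (s 1)]
      linear_combination h2
    · field_simp
    · rw [div_mul_eq_mul_div, eq_comm, div_eq_iff hi', mul_comm (s 1)]
      linear_combination -h0
  · have hi' : r 2 ≠ 0 := hi
    refine ⟨s 2 / r 2, funext fun j => ?_⟩
    fin_cases j <;> simp only [Pi.smul_apply, smul_eq_mul, Fin.reduceFinMk, Fin.mk_zero, Fin.mk_one]
    · rw [div_mul_eq_mul_div, eq_comm, div_eq_iff hi', mul_comm (s 2)]
      linear_combination -h1
    · rw [div_mul_eq_mul_div, eq_comm, div_eq_iff hi', mul_comm (s 2)]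
      linear_combination h0
    · field_simp

lemma no_isotropic_triple (u v w : V6)
    (huv : Bf u v = 0) (huw : Bf u w = 0) (hvw : Bf v w = 0) :
    ¬ LinearIndependent ℝ ![u, v, w] := by
  classical
  intro hli
  set M : Matrix (Fin 3) (Fin 3) ℝ := Matrix.of ![u.1, v.1, w.1] with hM
  set N : Matrix (Fin 3) (Fin 3) ℝ := Matrix.of ![u.2, v.2, w.2] with hN
  have huv0 := congrFun huv 0
  have huv1 := congrFun huv 1
  have huv2 := congrFun huv 2
  have huw0 := congrFun huw 0
  have huw1 := congrFun huw 1
  have huw2 := congrFun huw 2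
  have hvw0 := congrFun hvw 0
  have hvw1 := congrFun hvw 1
  have hvw2 := congrFun hvw 2
  simp [Bf_apply, cross_apply] at huv0 huv1 huv2 huw0 huw1 huw2 hvw0 hvw1 hvw2
  have hadj : adjugate M = - adjugate N := by
    rw [adjugate_fin_three M, adjugate_fin_three N]
    ext i j
    fin_cases i <;> fin_cases j <;>
      simp [hM, hN] <;> linarith
  have dM : M.det = 0 := det_eq_zero_of_adj M N hadj
  have dMt : Mᵀ.det = 0 := by rw [det_transpose]; exact dM
  obtain ⟨g, hg0, hgM⟩ : ∃ g ≠ 0, Mᵀ *ᵥ g = 0 := (Matrix.exists_mulVec_eq_zero_iff).mpr dMt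
  set x : V6 := g 0 • u + g 1 • v + g 2 • w with hx
  have hx1 : x.1 = 0 := by
    funext j
    have hj := congrFun hgM j
    simp [Matrix.mulVec, dotProduct, Fin.sum_univ_three, Matrix.transpose_apply, hM] at hj
    simp [hx]
    fin_cases j <;> simp at hj ⊢ <;> linarith
  have hxne : x ≠ 0 := by
    intro h0
    refine hg0 (funext fun i => Fintype.linearIndependent_iff.mp hli g ?_ i)
    rw [Fin.sum_univ_three]
    simpa using h0
  have hr : x.2 ≠ 0 := by
    intro h2
    exact hxne (Prod.ext_iff.mpr ⟨hx1, h2⟩)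
  have hbx : ∀ y : V6, Bf y u = 0 → Bf y v = 0 → Bf y w = 0 → Bf x y = 0 := by
    intro y h1 h2 h3
    rw [hx]
    simp only [map_add, _root_.map_smul, LinearMap.add_apply, LinearMap.smul_apply]
    rw [Bf_skew y u, Bf_skew y v, Bf_skew y w, h1, h2, h3]
    simp
  have hvu : Bf v u = 0 := by rw [Bf_skew u v, huv, neg_zero]
  have hwu : Bf w u = 0 := by rw [Bf_skew u w, huw, neg_zero]
  have hwv : Bf w v = 0 := by rw [Bf_skew v w, hvw, neg_zero]
  have hbxu : Bf x u = 0 := hbx u (Bf_self u) huv huw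
  have hbxv : Bf x v = 0 := hbx v hvu (Bf_self v) hvw
  have hbxw : Bf x w = 0 := hbx w hwu hwv (Bf_self w)
  have hcr : ∀ y : V6, Bf x y = 0 → crossProduct x.2 y.2 = 0 := by
    intro y h
    rw [Bf_apply, hx1] at h
    simpa using h
  obtain ⟨tu, htu⟩ := parallel_of_cross_eq_zero hr (hcr u hbxu)
  obtain ⟨tv, htv⟩ := parallel_of_cross_eq_zero hr (hcr v hbxv)
  obtain ⟨tw, htw⟩ := parallel_of_cross_eq_zero hr (hcr w hbxw)
  have c1 : crossProduct u.1 v.1 = 0 := by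
    have h := huv
    rw [Bf_apply, htu, htv] at h
    simpa [LinearMap.map_smul₂, _root_.map_smul, smul_smul] using h
  have c2 : crossProduct u.1 w.1 = 0 := by
    have h := huw
    rw [Bf_apply, htu, htw] at h
    simpa [LinearMap.map_smul₂, _root_.map_smul, smul_smul] using h
  have c3 : crossProduct v.1 w.1 = 0 := by
    have h := hvw
    rw [Bf_apply, htv, htw] at h
    simpa [LinearMap.map_smul₂, _root_.map_smul, smul_smul] using h
  have he : ∃ e : V3, (∃ a : ℝ, u.1 = a • e) ∧ (∃ b : ℝ, v.1 = b • e) ∧ (∃ c : ℝ, w.1 = c • e) := by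
    by_cases h1 : u.1 = 0
    · by_cases h2 : v.1 = 0
      · by_cases h3 : w.1 = 0
        · exact ⟨x.2, ⟨0, by simp [h1]⟩, ⟨0, by simp [h2]⟩, ⟨0, by simp [h3]⟩⟩
        · exact ⟨w.1, ⟨0, by simp [h1]⟩, ⟨0, by simp [h2]⟩, ⟨1, by simp⟩⟩
      · obtain ⟨t, ht⟩ := parallel_of_cross_eq_zero h2 c3
        exact ⟨v.1, ⟨0, by simp [h1]⟩, ⟨1, by simp⟩, ⟨t, ht⟩⟩
    · obtain ⟨t, ht⟩ := parallel_of_cross_eq_zero h1 c1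
      obtain ⟨t', ht'⟩ := parallel_of_cross_eq_zero h1 c2
      exact ⟨u.1, ⟨1, by simp⟩, ⟨t, ht⟩, ⟨t', ht'⟩⟩
  obtain ⟨e, ⟨au, hau⟩, ⟨av, hav⟩, ⟨aw, haw⟩⟩ := he
  set E : V6 := (e, (0 : V3)) with hE
  set R : V6 := ((0 : V3), x.2) with hR
  have hmemE : E ∈ Submodule.span ℝ ({E, R} : Set V6) := Submodule.subset_span (by simp)
  have hmemR : R ∈ Submodule.span ℝ ({E, R} : Set V6) := Submodule.subset_span (by simp)
  have hmem : ∀ i, ![u, v, w] i ∈ Submodule.span ℝ ({E, R} : Set V6) := by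
    intro i
    fin_cases i <;> simp only [Matrix.cons_val_zero, Matrix.cons_val_one, Matrix.head_cons,
      Matrix.cons_val_two, Matrix.tail_cons]
    · have : u = au • E + tu • R := Prod.ext_iff.mpr ⟨by simp [hE, hR, hau], by simp [hE, hR, htu]⟩
      rw [this]; exact add_mem (smul_mem _ _ hmemE) (smul_mem _ _ hmemR)
    · have : v = av • E + tv • R := Prod.ext_iff.mpr ⟨by simp [hE, hR, hav], by simp [hE, hR, htv]⟩
      rw [this]; exact add_mem (smul_mem _ _ hmemE) (smul_mem _ _ hmemR)
    · have : w = aw • E + tw • R := Prod.ext_iff.mpr ⟨by simp [hE, hR, haw], by simp [hE, hR, htw]⟩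
      rw [this]; exact add_mem (smul_mem _ _ hmemE) (smul_mem _ _ hmemR)
  have h3 : finrank ℝ (span ℝ (Set.range ![u, v, w])) = 3 := by
    rw [finrank_span_eq_card hli]; simp
  have hle : span ℝ (Set.range ![u, v, w]) ≤ span ℝ ({E, R} : Set V6) :=
    span_le.mpr (by rintro z ⟨i, rfl⟩; exact hmem i)
  have h2 : finrank ℝ (span ℝ ({E, R} : Set V6)) ≤ 2 := by
    refine le_trans (finrank_span_le_card _) ?_
    rw [Set.toFinset_insert, Set.toFinset_singleton]
    exact le_trans (Finset.card_insert_le _ _) (by simp)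
  have := Submodule.finrank_mono hle
  omega

lemma dot3_single (a : V3) (i : Fin 3) : dot3 a (Pi.single i 1) = a i := by
  simp [dot3, Pi.single_apply, mul_ite, Finset.sum_ite_eq']

lemma jdot (x y : V6) (c : V3) : dot6 (jFun c x) y = dot3 (Bf x y) c := by
  simp only [Quaternion.imI_mul, Quaternion.imJ_mul, Quaternion.imK_mul, jFun, imQ]
  simp [dot6, dot3, jFun, imQ, toQ, Bf_apply, cross_apply, Fin.sum_univ_three,
    Quaternion.imI_mul]
  ring

set_option synthInstance.maxHeartbeats 1000000 in
set_option maxHeartbeats 1000000 in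
/-- The Lie algebras `n(j)` and `n(j')` are not isomorphic: there is no `ℝ`-linear
bijection `φ` with `φ([X,Y]) = [φ(X),φ(Y)]'` for all `X, Y`. -/
theorem n_j_not_isomorphic_n_j'
    (β β' : V6 → V6 → V3)
    (hβ : ∀ (x y : V6) (c : V3), dot3 (β x y) c = dot6 (jFun c x) y)
    (hβ' : ∀ (x y : V6) (c : V3), dot3 (β' x y) c = dot6 (j'Fun c x) y) :
    ¬ ∃ φ : (V6 × V3) ≃ₗ[ℝ] (V6 × V3),
      ∀ X Y : V6 × V3,
        φ (((0 : V6), β X.1 Y.1)) = (((0 : V6), β' (φ X).1 (φ Y).1) : V6 × V3) := by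
  rintro ⟨φ, hφ⟩
  have hβeq : ∀ x y : V6, β x y = Bf x y := by
    intro x y
    funext i
    rw [← dot3_single (β x y) i, hβ x y _, jdot, dot3_single]
  have hβ'0 : ∀ a b : V6, a.2 = 0 → b.2 = 0 → β' a b = 0 := by
    intro a b h1 h2
    funext i
    rw [← dot3_single (β' a b) i, hβ' a b _]
    simp only [Quaternion.imI_mul, Quaternion.imJ_mul, Quaternion.imK_mul, j'Fun, imQ]
    simp [j'Fun, dot6, dot3, imQ, toQ, h1, h2, Fin.sum_univ_three, Quaternion.imI_mul]
  -- the linear maps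
  set p2 : (V6 × V3) →ₗ[ℝ] V3 := (LinearMap.snd ℝ V3 V3).comp (LinearMap.fst ℝ V6 V3) with hp2
  set ψ : (V6 × V3) →ₗ[ℝ] V3 := p2.comp (φ : (V6 × V3) →ₗ[ℝ] (V6 × V3)) with hψ
  set T : Submodule ℝ (V6 × V3) := LinearMap.ker ψ with hTdef
  have h9 : finrank ℝ (V6 × V3) = 9 := by
    simp [Module.finrank_prod]
  have hψsurj : Function.Surjective ψ := by
    intro c
    refine ⟨φ.symm (((0 : V3), c), (0 : V3)), ?_⟩
    simp [hψ, hp2]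
  have hT : finrank ℝ T = 6 := by
    have h := LinearMap.finrank_range_add_finrank_ker ψ
    rw [LinearMap.range_eq_top.mpr hψsurj, finrank_top, h9, ← hTdef] at h
    have h3 : finrank ℝ V3 = 3 := by simp
    omega
  set q1 : (V6 × V3) →ₗ[ℝ] V6 := LinearMap.fst ℝ V6 V3 with hq1
  set W : Submodule ℝ V6 := T.map q1 with hWdef
  have hW3 : 3 ≤ finrank ℝ W := by
    set f : T →ₗ[ℝ] V6 := q1.comp T.subtype with hfdef
    have hrange : LinearMap.range f = W := by
      rw [hfdef, LinearMap.range_comp, Submodule.range_subtype]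
    have hrn := LinearMap.finrank_range_add_finrank_ker f
    rw [hrange, hT] at hrn
    have hkerle : finrank ℝ (LinearMap.ker f) ≤ 3 := by
      set ι : (LinearMap.ker f) →ₗ[ℝ] V3 :=
        (LinearMap.snd ℝ V6 V3).comp (T.subtype.comp (LinearMap.ker f).subtype) with hι
      have hinj : Function.Injective ι := by
        intro Y Z h
        have hY : ((Y : T) : V6 × V3).1 = 0 := Y.2
        have hZ : ((Z : T) : V6 × V3).1 = 0 := Z.2
        apply Subtype.ext
        apply Subtype.ext
        exact Prod.ext_iff.mpr ⟨by rw [hY, hZ], h⟩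
      have := LinearMap.finrank_le_finrank_of_injective hinj
      simpa using this
    omega
  -- isotropy of W
  have hiso : ∀ x ∈ W, ∀ y ∈ W, Bf x y = 0 := by
    intro x hx y hy
    rw [hWdef] at hx hy
    obtain ⟨X, hX, rfl⟩ := Submodule.mem_map.mp hx
    obtain ⟨Y, hY, rfl⟩ := Submodule.mem_map.mp hy
    have hX' : (φ X).1.2 = 0 := hX
    have hY' : (φ Y).1.2 = 0 := hY
    have h3 := hφ X Y
    rw [hβ'0 _ _ hX' hY'] at h3
    have h0 : ((0 : V6), β X.1 Y.1) = (0 : V6 × V3) := by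
      apply φ.injective
      rw [h3, map_zero]
      rfl
    have h4 : β X.1 Y.1 = 0 := congrArg Prod.snd h0
    rw [hβeq] at h4
    exact h4
  -- extract a linearly independent triple
  obtain ⟨f0, hf0⟩ := exists_linearIndependent_of_le_finrank (R := ℝ) (M := W) hW3
  have hgli : LinearIndependent ℝ (fun i => ((f0 i : V6))) :=
    hf0.map' W.subtype (Submodule.ker_subtype W)
  refine no_isotropic_triple (f0 0 : V6) (f0 1 : V6) (f0 2 : V6)
    (hiso _ (f0 0).2 _ (f0 1).2) (hiso _ (f0 0).2 _ (f0 2).2) (hiso _ (f0 1).2 _ (f0 2).2) ?_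
  have hfun : ![(f0 0 : V6), (f0 1 : V6), (f0 2 : V6)] = fun i => ((f0 i : V6)) := by
    funext i
    fin_cases i <;> rfl
  rw [hfun]
  exact hgli
end
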